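/- For every finite contiguous block S of the Thue–Morse word of even length, the difference between the numbers of A's and of B's in S is either 0 or ±2: for all natural numbers a and n with n even, the integer #{i : a ≤ i < a + n and t(i) = 0} − #{i : a ≤ i < a + n and t(i) = 1} belongs to {−2, 0, 2}. -/

import Mathlib

open Fin.NatCast in
/-- The Thue–Morse sequence: `t n` is the parity of the number of `1` digits
in the binary expansion of `n` (so `t 0 = 0`, `t (2n) = t n`, `t (2n+1) = 1 - t n`). -/
def thueMorse (n : ℕ) : Fin 2 := ((Nat.digits 2 n).sum : Fin 2)

/-
Pair off each even position `2k` with `2k + 1`: since `t (2k + 1) ≠ t (2k)`, every aligned pair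
contributes one `A` and one `B`, so with `A ↦ 1`, `B ↦ -1` every prefix sum is `0` or `±1`.
A block sum is a difference of two prefix sums, hence lies in `[-2, 2]`, and for a block of
even length it is even.
-/

open Finset

theorem thueMorse_two_mul (k : ℕ) : thueMorse (2 * k) = thueMorse k := by
  rcases Nat.eq_zero_or_pos k with rfl | hk
  · rfl
  · rw [thueMorse, Nat.digits_def' one_lt_two (by omega)]
    simp [thueMorse]

theorem thueMorse_two_mul_add_one (k : ℕ) : thueMorse (2 * k + 1) = thueMorse k + 1 := by
  rw [thueMorse, Nat.digits_def' one_lt_two (by omega), show (2 * k + 1) % 2 = 1 by omega,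
    show (2 * k + 1) / 2 = k by omega, List.sum_cons, add_comm]
  simp only [thueMorse, Fin.ext_iff, Fin.val_add, Fin.val_natCast, Fin.val_one]
  omega

section PairedSums

variable {u : ℕ → ℤ}

theorem sum_range_two_mul_eq_zero_of_pairs (hpair : ∀ k, u (2 * k + 1) = -u (2 * k)) (m : ℕ) :
    ∑ i ∈ range (2 * m), u i = 0 := by
  induction m with
  | zero => simp
  | succ m ih =>
    rw [Nat.mul_succ, sum_range_succ, sum_range_succ, ih, hpair]
    ring

theorem abs_sum_range_le_one_of_pairs (hpair : ∀ k, u (2 * k + 1) = -u (2 * k))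
    (hbound : ∀ i, |u i| ≤ 1) (N : ℕ) : |∑ i ∈ range N, u i| ≤ 1 := by
  obtain ⟨m, rfl | rfl⟩ := Nat.even_or_odd' N
  · simp [sum_range_two_mul_eq_zero_of_pairs hpair]
  · simpa [sum_range_succ, sum_range_two_mul_eq_zero_of_pairs hpair] using hbound (2 * m)

theorem abs_sum_Ico_le_two_of_pairs (hpair : ∀ k, u (2 * k + 1) = -u (2 * k))
    (hbound : ∀ i, |u i| ≤ 1) (a n : ℕ) : |∑ i ∈ Ico a (a + n), u i| ≤ 2 := by
  rw [sum_Ico_eq_sub _ (Nat.le_add_right a n)]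
  calc |∑ i ∈ range (a + n), u i - ∑ i ∈ range a, u i|
      ≤ |∑ i ∈ range (a + n), u i| + |∑ i ∈ range a, u i| := abs_sub _ _
    _ ≤ 1 + 1 := add_le_add (abs_sum_range_le_one_of_pairs hpair hbound _)
        (abs_sum_range_le_one_of_pairs hpair hbound _)
    _ = 2 := by norm_num

end PairedSums

section Fin2Counts

variable {α : Type*} (f : α → Fin 2) (s : Finset α)

theorem card_filter_eq_zero_add_card_filter_eq_one :
    #{i ∈ s | f i = 0} + #{i ∈ s | f i = 1} = #s := by
  convert card_filter_add_card_filter_not (s := s) (f · = 0) using 3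
  exact filter_congr fun i _ => by omega

theorem card_filter_eq_zero_sub_card_filter_eq_one :
    (#{i ∈ s | f i = 0} : ℤ) - #{i ∈ s | f i = 1} = ∑ i ∈ s, if f i = 0 then 1 else -1 := by
  rw [card_filter, card_filter]
  push_cast
  rw [← sum_sub_distrib]
  refine sum_congr rfl fun i _ => ?_
  split_ifs <;> omega

theorem even_card_filter_eq_zero_sub_card_filter_eq_one (hs : Even #s) :
    Even ((#{i ∈ s | f i = 0} : ℤ) - #{i ∈ s | f i = 1}) := by
  have hsum := card_filter_eq_zero_add_card_filter_eq_one f s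
  obtain ⟨k, hk⟩ := hs
  exact ⟨k - #{i ∈ s | f i = 1}, by omega⟩

end Fin2Counts

def thueMorseSign (i : ℕ) : ℤ := if thueMorse i = 0 then 1 else -1

theorem thueMorseSign_two_mul_add_one (k : ℕ) :
    thueMorseSign (2 * k + 1) = -thueMorseSign (2 * k) := by
  rw [thueMorseSign, thueMorseSign, thueMorse_two_mul, thueMorse_two_mul_add_one]
  split_ifs <;> omega

theorem abs_thueMorseSign_le_one (i : ℕ) : |thueMorseSign i| ≤ 1 := by
  unfold thueMorseSign
  split_ifs <;> simp

/-- In any finite contiguous block of even length of the Thue–Morse word, the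
difference between the numbers of `A`'s (`t i = 0`) and of `B`'s (`t i = 1`)
is either `0` or `±2`. -/
theorem thueMorse_even_block_discrepancy (a n : ℕ) (hn : Even n) :
    ((((Finset.Ico a (a + n)).filter fun i => thueMorse i = 0).card : ℤ) -
        (((Finset.Ico a (a + n)).filter fun i => thueMorse i = 1).card : ℤ))
      ∈ ({-2, 0, 2} : Set ℤ) := by
  obtain ⟨k, hk⟩ := even_card_filter_eq_zero_sub_card_filter_eq_one thueMorse (Ico a (a + n))
    (by simpa using hn)
  have hbound :=
    abs_sum_Ico_le_two_of_pairs thueMorseSign_two_mul_add_one abs_thueMorseSign_le_one a n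
  rw [card_filter_eq_zero_sub_card_filter_eq_one] at hk ⊢
  rw [abs_le] at hbound
  unfold thueMorseSign at hbound
  simp only [Set.mem_insert_iff, Set.mem_singleton_iff]
  omega
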